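/- arXiv:1106.1895 — 4 statements merged into one kernel-verified Lean document; each statement's English description precedes it below -/
import Mathlib

section
/- There exist constants C > 0 and t₀ > 0 such that for every complex number s = σ + it with 1 ≤ σ ≤ 2 and t ≥ t₀, one has |ζ(s)| ≤ C · log t. -/
/-!
For `1 < σ`, split the Dirichlet series of `ζ(s)` at `N = ⌊t⌋`. The first `N` terms are bounded
by the harmonic number `H_N ≤ 1 + log t`. For `n > N`, the mean value theorem shows that `n^{-s}`
differs from `G(n + 1) - G(n)`, where `G(x) = x^{1-s}/(1-s)` is a primitive of `x^{-s}`, by at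
most `|s|/n²`; the differences telescope to something of norm `≤ 2/|1 - s| ≤ 2/t`, and the errors
add up to at most `2|s|/(N + 1) = O(1)`. The resulting bound on the partial sums is uniform in
`σ ≥ 1` and continuous in `s`, so it passes to `ζ(s)` and, by continuity of `ζ`, to `σ = 1`.
-/
open Complex Finset

lemma norm_ofReal_cpow_neg_sub_le {s : ℂ} (hs : 1 ≤ s.re) {a x : ℝ} (ha : 1 ≤ a)
    (hx : x ∈ Set.Icc a (a + 1)) : ‖(x : ℂ) ^ (-s) - (a : ℂ) ^ (-s)‖ ≤ ‖s‖ / a ^ 2 := by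
  have hs0 : -s ≠ 0 := neg_ne_zero.mpr fun h => by simp [h] at hs; linarith
  have hderiv : ∀ y ∈ Set.Icc a (a + 1),
      HasDerivWithinAt (fun y : ℝ => (y : ℂ) ^ (-s)) (-s * (y : ℂ) ^ (-s - 1)) (Set.Icc a (a + 1)) y :=
    fun y hy => (hasDerivAt_ofReal_cpow_const (by linarith [hy.1]) hs0).hasDerivWithinAt
  have hbound : ∀ y ∈ Set.Icc a (a + 1), ‖-s * (y : ℂ) ^ (-s - 1)‖ ≤ ‖s‖ / a ^ 2 := by
    intro y hy
    have hy1 : 1 ≤ y := ha.trans hy.1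
    rw [norm_mul, norm_neg, norm_cpow_eq_rpow_re_of_pos (by linarith), div_eq_mul_inv]
    gcongr
    calc y ^ (-s - 1).re ≤ y ^ (-2 : ℝ) :=
          Real.rpow_le_rpow_of_exponent_le hy1 (by simp; linarith)
      _ = (y ^ 2)⁻¹ := by rw [Real.rpow_neg (by linarith)]; norm_cast
      _ ≤ (a ^ 2)⁻¹ := by gcongr; exact hy.1
  have hxa : ‖x - a‖ ≤ 1 := by
    rw [Real.norm_eq_abs, abs_le]; constructor <;> linarith [hx.1, hx.2]
  calc ‖(x : ℂ) ^ (-s) - (a : ℂ) ^ (-s)‖ ≤ ‖s‖ / a ^ 2 * ‖x - a‖ :=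
        (convex_Icc a (a + 1)).norm_image_sub_le_of_norm_hasDerivWithin_le hderiv hbound
          (Set.left_mem_Icc.mpr (by linarith)) hx
    _ ≤ ‖s‖ / a ^ 2 := mul_le_of_le_one_right (by positivity) hxa

lemma norm_ofReal_cpow_neg_sub_primitive_le {s : ℂ} (hs : 1 ≤ s.re) (hs1 : s ≠ 1) {a : ℝ}
    (ha : 1 ≤ a) :
    ‖(a : ℂ) ^ (-s) - ((((a + 1 : ℝ) : ℂ) ^ (1 - s) / (1 - s)) - (a : ℂ) ^ (1 - s) / (1 - s))‖ ≤
      ‖s‖ / a ^ 2 := by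
  set F : ℝ → ℂ := fun y => (y : ℂ) * (a : ℂ) ^ (-s) - (y : ℂ) ^ (1 - s) / (1 - s)
  have hderiv : ∀ x ∈ Set.Icc a (a + 1),
      HasDerivWithinAt F ((a : ℂ) ^ (-s) - (x : ℂ) ^ (-s)) (Set.Icc a (a + 1)) x := by
    intro x hx
    have hG := hasDerivAt_ofReal_cpow_const' (by linarith [hx.1] : x ≠ 0)
      (by simpa using hs1 : -s ≠ -1)
    rw [neg_add_eq_sub] at hG
    have hid := ((hasDerivAt_id x).ofReal_comp).mul_const ((a : ℂ) ^ (-s))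
    simp only [id, ofReal_one, one_mul] at hid
    exact (hid.sub hG).hasDerivWithinAt
  have hF := (convex_Icc a (a + 1)).norm_image_sub_le_of_norm_hasDerivWithin_le hderiv
    (fun x hx => by rw [norm_sub_rev]; exact norm_ofReal_cpow_neg_sub_le hs ha hx)
    (Set.left_mem_Icc.mpr (by linarith)) (Set.right_mem_Icc.mpr (by linarith))
  have heq : (a : ℂ) ^ (-s) - ((((a + 1 : ℝ) : ℂ) ^ (1 - s) / (1 - s)) -
      (a : ℂ) ^ (1 - s) / (1 - s)) = F (a + 1) - F a := by
    simp only [F]; push_cast; ring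
  rw [heq]
  rwa [add_sub_cancel_left, norm_one, mul_one] at hF

lemma sum_Ico_inv_sq_le {M : ℕ} (hM : 1 ≤ M) (K : ℕ) :
    ∑ n ∈ Ico M K, ((n : ℝ) ^ 2)⁻¹ ≤ 2 / M := by
  obtain ⟨N, rfl⟩ := Nat.exists_eq_add_of_le' hM
  rw [Ico_add_one_left_eq_Ioo]
  exact_mod_cast sum_Ioo_inv_sq_le N K

lemma norm_ofReal_cpow_one_sub_div_le {s : ℂ} (hs : 1 ≤ s.re) {x : ℝ} (hx : 1 ≤ x) :
    ‖(x : ℂ) ^ (1 - s) / (1 - s)‖ ≤ 1 / ‖1 - s‖ := by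
  rw [norm_div, norm_cpow_eq_rpow_re_of_pos (by linarith)]
  gcongr
  exact Real.rpow_le_one_of_one_le_of_nonpos hx (by simpa using hs)

lemma norm_sum_Ico_cpow_neg_le {s : ℂ} (hs : 1 ≤ s.re) (hs1 : s ≠ 1) {M K : ℕ} (hM : 1 ≤ M)
    (hMK : M ≤ K) :
    ‖∑ n ∈ Ico M K, (n : ℂ) ^ (-s)‖ ≤ 2 * ‖s‖ / M + 2 / ‖1 - s‖ := by
  set G : ℕ → ℂ := fun n => (n : ℂ) ^ (1 - s) / (1 - s)
  have hG : ∀ n ∈ Ico M K, ‖(n : ℂ) ^ (-s) - (G (n + 1) - G n)‖ ≤ ‖s‖ * ((n : ℝ) ^ 2)⁻¹ := by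
    intro n hn
    have hn1 : (1 : ℝ) ≤ n := by exact_mod_cast hM.trans (mem_Ico.mp hn).1
    simpa [G, div_eq_mul_inv] using norm_ofReal_cpow_neg_sub_primitive_le hs hs1 hn1
  have hGM : ∀ n, M ≤ n → ‖G n‖ ≤ 1 / ‖1 - s‖ := fun n hn => by
    simpa [G] using norm_ofReal_cpow_one_sub_div_le hs (x := n) (by exact_mod_cast hM.trans hn)
  calc ‖∑ n ∈ Ico M K, (n : ℂ) ^ (-s)‖
      = ‖∑ n ∈ Ico M K, ((n : ℂ) ^ (-s) - (G (n + 1) - G n)) + (G K - G M)‖ := by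
        rw [sum_sub_distrib, sum_Ico_sub G hMK, sub_add_cancel]
    _ ≤ ∑ n ∈ Ico M K, ‖s‖ * ((n : ℝ) ^ 2)⁻¹ + (‖G K‖ + ‖G M‖) :=
        (norm_add_le _ _).trans (add_le_add ((norm_sum_le _ _).trans (sum_le_sum hG))
          (norm_sub_le _ _))
    _ ≤ ‖s‖ * (2 / M) + (1 / ‖1 - s‖ + 1 / ‖1 - s‖) := by
        rw [← mul_sum]
        gcongr
        exacts [sum_Ico_inv_sq_le hM K, hGM K hMK, hGM M le_rfl]
    _ = 2 * ‖s‖ / M + 2 / ‖1 - s‖ := by ring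

lemma norm_sum_range_cpow_neg_le_harmonic {s : ℂ} (hs : 1 ≤ s.re) (N : ℕ) :
    ‖∑ n ∈ range (N + 1), (n : ℂ) ^ (-s)‖ ≤ harmonic N := by
  have hs0 : -s ≠ 0 := neg_ne_zero.mpr fun h => by simp [h] at hs; linarith
  have hterm : ∀ n : ℕ, ‖((n + 1 : ℕ) : ℂ) ^ (-s)‖ ≤ ((n + 1 : ℕ) : ℝ)⁻¹ := fun n => by
    rw [norm_natCast_cpow_of_pos n.succ_pos, neg_re, Real.rpow_neg (by positivity)]
    gcongr
    exact Real.self_le_rpow_of_one_le (by simp) hs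
  calc ‖∑ n ∈ range (N + 1), (n : ℂ) ^ (-s)‖ ≤ ∑ n ∈ range N, ‖((n + 1 : ℕ) : ℂ) ^ (-s)‖ := by
        simpa [sum_range_succ', zero_cpow hs0] using norm_sum_le _ _
    _ ≤ harmonic N := by
        simpa [harmonic] using sum_le_sum fun n _ => hterm n

lemma norm_sum_range_cpow_neg_le {s : ℂ} (hs : 1 ≤ s.re) (hs1 : s ≠ 1) {N K : ℕ}
    (hNK : N + 1 ≤ K) :
    ‖∑ n ∈ range K, (n : ℂ) ^ (-s)‖ ≤ harmonic N + 2 * ‖s‖ / (N + 1) + 2 / ‖1 - s‖ := by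
  rw [← sum_range_add_sum_Ico _ hNK]
  refine (norm_add_le _ _).trans ?_
  rw [add_assoc]
  gcongr
  · exact norm_sum_range_cpow_neg_le_harmonic hs N
  · exact_mod_cast norm_sum_Ico_cpow_neg_le hs hs1 N.succ_pos hNK

lemma hasSum_natCast_cpow_neg_riemannZeta {s : ℂ} (hs : 1 < s.re) :
    HasSum (fun n : ℕ => (n : ℂ) ^ (-s)) (riemannZeta s) := by
  rw [zeta_eq_tsum_one_div_nat_cpow hs]
  simpa [cpow_neg] using (summable_one_div_nat_cpow.mpr hs).hasSum

lemma norm_riemannZeta_le_harmonic_add {s : ℂ} (hs : 1 ≤ s.re) (hs1 : s ≠ 1) (N : ℕ) :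
    ‖riemannZeta s‖ ≤ harmonic N + 2 * ‖s‖ / (N + 1) + 2 / ‖1 - s‖ := by
  have hgt : ∀ z ∈ {z : ℂ | 1 < z.re},
      ‖riemannZeta z‖ ≤ harmonic N + 2 * ‖z‖ / (N + 1) + 2 / ‖1 - z‖ := fun z hz =>
    le_of_tendsto (hasSum_natCast_cpow_neg_riemannZeta hz).tendsto_sum_nat.norm
      (Filter.eventually_atTop.mpr ⟨N + 1, fun K hK =>
        norm_sum_range_cpow_neg_le hz.le (by rintro rfl; simp at hz) hK⟩)
  have hs1' : ‖1 - s‖ ≠ 0 := by simpa [sub_eq_zero] using hs1.symm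
  refine ContinuousWithinAt.closure_le (by simpa using hs)
    (differentiableAt_riemannZeta hs1).continuousAt.norm.continuousWithinAt ?_ hgt
  exact ContinuousAt.continuousWithinAt (by fun_prop (disch := exact hs1'))

/-- Theorem 7, second case: `ζ(s) = O(log t)` in the strip `1 ≤ σ ≤ 2`, `t ≥ t₀`. -/
theorem zeta_bound_strip_one_two :
    ∃ C : ℝ, 0 < C ∧ ∃ t₀ : ℝ, 0 < t₀ ∧
      ∀ s : ℂ, 1 ≤ s.re → s.re ≤ 2 → t₀ ≤ s.im →
        ‖riemannZeta s‖ ≤ C * Real.log s.im := by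
  refine ⟨7, by norm_num, 3, by norm_num, fun s hσ hσ2 ht => ?_⟩
  have hs1 : s ≠ 1 := by rintro rfl; simp at ht; linarith
  set N := ⌊s.im⌋₊
  have hN : s.im < N + 1 := Nat.lt_floor_add_one _
  have hN1 : (1 : ℝ) ≤ N := by exact_mod_cast Nat.le_floor (by norm_num; linarith)
  have hharmonic : (harmonic N : ℝ) ≤ 1 + Real.log s.im :=
    (harmonic_le_one_add_log N).trans (by gcongr; exact Nat.floor_le (by linarith))
  have hnorm : ‖s‖ ≤ 2 + s.im := (norm_le_abs_re_add_abs_im s).trans <| by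
    rw [abs_of_nonneg (by linarith), abs_of_nonneg (by linarith)]; linarith
  have him : s.im ≤ ‖1 - s‖ :=
    (le_abs_self _).trans (by simpa using abs_im_le_norm (1 - s))
  have hlog : 1 ≤ Real.log s.im := by
    rw [Real.le_log_iff_exp_le (by linarith)]
    linarith [Real.exp_one_lt_d9]
  calc ‖riemannZeta s‖ ≤ harmonic N + 2 * ‖s‖ / (N + 1) + 2 / ‖1 - s‖ :=
        norm_riemannZeta_le_harmonic_add hσ hs1 N
    _ ≤ (1 + Real.log s.im) + 4 + 1 := by
        gcongr
        · rw [div_le_iff₀ (by positivity)]; linarith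
        · rw [div_le_one (by linarith)]; linarith
    _ ≤ 7 * Real.log s.im := by linarith
end

section
/- The function 1/ζ(s) is unbounded on the half plane Re(s) > 1: for every real number C > 0 there exists a complex number s with Re(s) > 1 and |1/ζ(s)| > C (equivalently, |ζ(s)| < 1/C). -/
/-!
Taking logarithms in the Euler product, `log ‖ζ(σ + it)‖ = -∑ₚ log ‖1 - p^(-σ-it)‖`.
Since `∑ₚ 1/p` diverges, for `σ` close to `1` some finite set `S` of primes has `∑_{p ∈ S} p^(-σ)`
as large as we please, while the tail `∑_{p ∉ S} p^(-σ)` is small. The numbers `log p` are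
linearly independent over `ℚ`, so Kronecker's theorem gives a `t` with `cos (t log p) ≤ -1/2` for
all `p ∈ S`; each such prime contributes at most `-p^(-σ)/4` to `log ‖ζ(σ + it)‖`, which is
therefore as negative as we please.
-/

open Complex Finset Filter

theorem norm_integral_exp_ofReal_mul_I_le {a : ℝ} (ha : a ≠ 0) (T : ℝ) :
    ‖∫ t in (0 : ℝ)..T, cexp (↑(a * t) * I)‖ ≤ 2 / |a| := by
  have haI : (a : ℂ) * I ≠ 0 := mul_ne_zero (ofReal_ne_zero.mpr ha) I_ne_zero
  have hnorm : ‖(a : ℂ) * I‖ = |a| := by simp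
  simp_rw [ofReal_mul, mul_right_comm _ _ I]
  rw [integral_exp_mul_complex haI, norm_div, hnorm, ofReal_zero, mul_zero, Complex.exp_zero]
  gcongr
  calc ‖cexp (↑a * I * ↑T) - 1‖ ≤ ‖cexp (↑(a * T) * I)‖ + ‖(1 : ℂ)‖ := by
        rw [ofReal_mul, mul_right_comm]; exact norm_sub_le _ _
    _ = 2 := by rw [norm_exp_ofReal_mul_I, norm_one]; norm_num

theorem norm_le_of_norm_sum_mul_exp_le {ι : Type*} [DecidableEq ι] {s : Finset ι} {lam : ι → ℝ}
    (hlam : Set.InjOn lam s) {c : ι → ℂ} {M : ℝ}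
    (hM : ∀ t : ℝ, ‖∑ i ∈ s, c i * cexp (↑(lam i * t) * I)‖ ≤ M) {j : ι} (hj : j ∈ s) :
    ‖c j‖ ≤ M := by
  set E := ∑ i ∈ s.erase j, ‖c i‖ * (2 / |lam i - lam j|)
  -- integrating against `exp (-i lam j t)` over `[0, T]` isolates `c j`
  have key : ∀ T > 0, ‖c j‖ * T ≤ M * T + E := by
    intro T hT
    have hshift : ∀ t : ℝ, (∑ i ∈ s, c i * cexp (↑(lam i * t) * I)) * cexp (↑(-lam j * t) * I)
        = ∑ i ∈ s, c i * cexp (↑((lam i - lam j) * t) * I) := fun t => by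
      rw [sum_mul]
      refine sum_congr rfl fun i _ => ?_
      rw [mul_assoc, ← Complex.exp_add]
      push_cast; ring_nf
    set J := ∫ t in (0 : ℝ)..T,
      (∑ i ∈ s, c i * cexp (↑(lam i * t) * I)) * cexp (↑(-lam j * t) * I)
    set R := ∑ i ∈ s.erase j, c i * ∫ t in (0 : ℝ)..T, cexp (↑((lam i - lam j) * t) * I)
    have hJ : J = c j * T + R := by
      simp_rw [J, hshift]
      rw [intervalIntegral.integral_finsetSum fun i _ => by
        apply Continuous.intervalIntegrable; fun_prop]
      rw [← add_sum_erase _ _ hj]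
      simp [R, intervalIntegral.integral_const_mul, mul_comm]
    have hJM : ‖J‖ ≤ M * T := by
      refine (intervalIntegral.norm_integral_le_of_norm_le_const (C := M) fun t _ => ?_).trans_eq ?_
      · rw [norm_mul, norm_exp_ofReal_mul_I, mul_one]; exact hM t
      · rw [sub_zero, abs_of_pos hT]
    have hR : ‖R‖ ≤ E := by
      refine (norm_sum_le _ _).trans (sum_le_sum fun i hi => ?_)
      rw [norm_mul]
      gcongr
      exact norm_integral_exp_ofReal_mul_I_le (sub_ne_zero.mpr <|
        hlam.ne (mem_of_mem_erase hi) hj (ne_of_mem_erase hi)) T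
    calc ‖c j‖ * T = ‖J - R‖ := by
          rw [hJ, add_sub_cancel_right, norm_mul, norm_real, Real.norm_of_nonneg hT.le]
      _ ≤ M * T + E := (norm_sub_le _ _).trans (add_le_add hJM hR)
  by_contra! h
  have hT : 0 < (E + 1) / (‖c j‖ - M) := div_pos (by positivity) (sub_pos.mpr h)
  have hET : (‖c j‖ - M) * ((E + 1) / (‖c j‖ - M)) = E + 1 := mul_div_cancel₀ _ (sub_pos.mpr h).ne'
  linarith [key _ hT]

theorem norm_one_sub_exp_ofReal_mul_I_sq (θ : ℝ) :
    ‖1 - cexp (↑θ * I)‖ ^ 2 = 2 - 2 * Real.cos θ := by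
  rw [Complex.sq_norm, normSq_apply]
  simp only [sub_re, sub_im, one_re, one_im, exp_ofReal_mul_I_re, exp_ofReal_mul_I_im]
  linear_combination Real.sin_sq_add_cos_sq θ

theorem prod_one_sub_exp_pow {ι : Type*} [Fintype ι] [DecidableEq ι] (lam : ι → ℝ) (t : ℝ)
    (N : ℕ) :
    (∏ i, (1 - cexp (↑(lam i * t) * I))) ^ N =
      ∑ g ∈ Fintype.piFinset fun _ => range (N + 1),
        (∏ i, (-1) ^ g i * (N.choose (g i) : ℂ)) * cexp (↑((∑ i, g i * lam i) * t) * I) := by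
  have hfactor : ∀ i, (1 - cexp (↑(lam i * t) * I)) ^ N = ∑ a ∈ range (N + 1),
      (-1) ^ a * (N.choose a : ℂ) * cexp (↑(a * lam i * t) * I) := fun i => by
    rw [sub_eq_neg_add, add_pow]
    refine sum_congr rfl fun a _ => ?_
    rw [one_pow, mul_one, neg_pow, ← Complex.exp_nat_mul]
    push_cast; ring_nf
  rw [← prod_pow, prod_congr rfl fun i _ => hfactor i, prod_univ_sum]
  refine sum_congr rfl fun g _ => ?_
  rw [prod_mul_distrib, ← Complex.exp_sum]
  push_cast
  rw [sum_mul, sum_mul]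

theorem eventually_mul_pow_lt_centralBinom_pow (k : ℕ) {r : ℝ} (hr₀ : 0 ≤ r) (hr₁ : r < 1) :
    ∀ᶠ m : ℕ in atTop, (4 ^ k * r) ^ m < (m.centralBinom : ℝ) ^ k := by
  filter_upwards [(tendsto_pow_const_mul_const_pow_of_lt_one k hr₀ hr₁).eventually_lt_const
    one_pos, eventually_ge_atTop 4] with m hm h4
  have hC : (0 : ℝ) < (m.centralBinom : ℝ) ^ k := by have := m.centralBinom_pos; positivity
  have hgrowth : ((4 : ℝ) ^ m) ^ k ≤ (m : ℝ) ^ k * (m.centralBinom : ℝ) ^ k := by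
    rw [← mul_pow]
    exact pow_le_pow_left₀ (by positivity)
      (by exact_mod_cast (Nat.four_pow_lt_mul_centralBinom m h4).le) k
  calc (4 ^ k * r) ^ m = ((4 : ℝ) ^ m) ^ k * r ^ m := by ring
    _ ≤ (m : ℝ) ^ k * (m.centralBinom : ℝ) ^ k * r ^ m := by gcongr
    _ = (m.centralBinom : ℝ) ^ k * ((m : ℝ) ^ k * r ^ m) := by ring
    _ < (m.centralBinom : ℝ) ^ k := mul_lt_of_lt_one_right hC hm

/-- Kronecker's theorem in Bohr's form. If every `t` had some `cos (lam i t) ≥ -1 + δ`, then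
`‖∏ i, (1 - exp (i lam i t))‖² ≤ 4 ^ k (1 - δ / 2)` for all `t`; but the `2m`-th power of this
product has, by independence of the frequencies, the coefficient `centralBinom m ^ k ≈ 4 ^ (m k)`,
and a coefficient is bounded by the sup norm. -/
theorem exists_forall_cos_mul_lt {ι : Type*} [Fintype ι] {lam : ι → ℝ}
    (hlam : Function.Injective fun g : ι → ℕ => ∑ i, (g i : ℝ) * lam i) {δ : ℝ} (hδ : 0 < δ) :
    ∃ t : ℝ, ∀ i, Real.cos (lam i * t) < -1 + δ := by
  classical
  by_contra! h
  set k := Fintype.card ι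
  set r := 1 - δ / 2 with hr_def
  have hr : 0 ≤ r := by obtain ⟨i, hi⟩ := h 0; simp only [mul_zero, Real.cos_zero] at hi; linarith
  have hbound : ∀ t : ℝ, ‖∏ i, (1 - cexp (↑(lam i * t) * I))‖ ^ 2 ≤ 4 ^ k * r := by
    intro t
    obtain ⟨j, hj⟩ := h t
    have hk : k = (k - 1) + 1 := (Nat.sub_add_cancel (Fintype.card_pos_iff.mpr ⟨j⟩)).symm
    rw [norm_prod, ← prod_pow, ← mul_prod_erase _ _ (mem_univ j)]
    calc _ ≤ 4 * r * ∏ i ∈ univ.erase j, (4 : ℝ) := by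
          gcongr with i
          · rw [norm_one_sub_exp_ofReal_mul_I_sq]; linarith
          · rw [norm_one_sub_exp_ofReal_mul_I_sq]; linarith [Real.neg_one_le_cos (lam i * t)]
      _ = 4 ^ k * r := by
          rw [prod_const, card_erase_of_mem (mem_univ j), card_univ, hk, pow_succ]; ring
  have hcoeff : ∀ m : ℕ, (m.centralBinom : ℝ) ^ k ≤ (4 ^ k * r) ^ m := by
    intro m
    have hmem : (fun _ => m) ∈ Fintype.piFinset fun _ : ι => range (2 * m + 1) :=
      Fintype.mem_piFinset.mpr fun _ => mem_range.mpr (by omega)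
    have := norm_le_of_norm_sum_mul_exp_le hlam.injOn
      (c := fun g => ∏ i, (-1) ^ g i * ((2 * m).choose (g i) : ℂ)) (M := (4 ^ k * r) ^ m)
      (fun t => ?_) hmem
    · simpa [norm_prod, Nat.centralBinom] using this
    · rw [← prod_one_sub_exp_pow, norm_pow, pow_mul]
      exact pow_le_pow_left₀ (by positivity) (hbound t) m
  obtain ⟨m, hm⟩ := (eventually_mul_pow_lt_centralBinom_pow k hr (by linarith)).exists
  exact (hm.trans_le (hcoeff m)).false

theorem Nat.Primes.sum_mul_log_injective {ι : Type*} [Fintype ι] {f : ι → Nat.Primes}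
    (hf : Function.Injective f) :
    Function.Injective fun g : ι → ℕ => ∑ i, (g i : ℝ) * Real.log (f i) := by
  have hpos : ∀ g : ι → ℕ, (0 : ℝ) < (∏ i, (f i : ℕ) ^ g i : ℕ) :=
    fun g => Nat.cast_pos.mpr <| prod_pos fun i _ => pow_pos (f i).prop.pos _
  have hlog : ∀ g : ι → ℕ,
      ∑ i, (g i : ℝ) * Real.log (f i) = Real.log (∏ i, (f i : ℕ) ^ g i : ℕ) := fun g => by
    push_cast
    rw [Real.log_prod fun i _ => by have := (f i).prop.pos; positivity]
    simp_rw [Real.log_pow]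
  have hfact : ∀ (g : ι → ℕ) (j : ι), (∏ i, (f i : ℕ) ^ g i).factorization (f j) = g j := by
    intro g j
    rw [Nat.factorization_prod fun i _ => pow_ne_zero _ (f i).prop.ne_zero,
      Finsupp.finsetSum_apply, sum_eq_single j]
    · simp [(f j).prop.factorization_pow]
    · intro i _ hij
      rw [(f i).prop.factorization_pow, Finsupp.single_eq_of_ne]
      exact fun h => hij (hf (Nat.Primes.coe_nat_injective h.symm))
    · simp
  intro g h hgh
  have hprod : ∏ i, (f i : ℕ) ^ g i = ∏ i, (f i : ℕ) ^ h i := by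
    have := Real.log_injOn_pos (hpos g) (hpos h) ((hlog g).symm.trans (hgh.trans (hlog h)))
    exact_mod_cast this
  funext j
  rw [← hfact g j, hprod, hfact h j]

theorem hasSum_neg_log_norm_one_sub_prime_cpow {s : ℂ} (hs : 1 < s.re) :
    HasSum (fun p : Nat.Primes => -Real.log ‖1 - (p : ℂ) ^ (-s)‖) (Real.log ‖riemannZeta s‖) := by
  have hsum : Summable fun p : Nat.Primes => -Complex.log (1 - (p : ℂ) ^ (-s)) := by
    have : Summable fun p : Nat.Primes => -(p : ℂ) ^ (-s) := by
      refine (Summable.of_norm ?_).neg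
      convert Nat.Primes.summable_rpow.mpr (show (-s).re < -1 by rw [neg_re]; linarith) with p
      exact norm_natCast_cpow_of_pos p.prop.pos _
    simpa [sub_eq_add_neg] using (Complex.summable_log_one_add_of_summable this).neg
  rw [← riemannZeta_eulerProduct_exp_log hs, Complex.norm_exp, Real.log_exp]
  simpa [Complex.log_re] using Complex.hasSum_re hsum.hasSum

theorem neg_log_norm_one_sub_le {z : ℂ} (hz : ‖z‖ ≤ 1 / 2) : -Real.log ‖1 - z‖ ≤ 2 * ‖z‖ := by
  have h1 : 1 - ‖z‖ ≤ ‖1 - z‖ := by simpa using norm_sub_norm_le (1 : ℂ) z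
  have hpos : 0 < ‖1 - z‖ := by linarith
  have hinv : ‖1 - z‖⁻¹ ≤ 1 + 2 * ‖z‖ := by
    rw [inv_le_iff_one_le_mul₀ hpos]
    nlinarith [norm_nonneg z]
  linarith [Real.one_sub_inv_le_log_of_pos hpos]

theorem neg_log_norm_one_sub_le_of_re_le {z : ℂ} (hz : ‖z‖ ≤ 1) (hre : z.re ≤ -‖z‖ / 2) :
    -Real.log ‖1 - z‖ ≤ -‖z‖ / 4 := by
  have h1 : 1 + ‖z‖ / 2 ≤ ‖1 - z‖ :=
    calc 1 + ‖z‖ / 2 ≤ (1 - z).re := by rw [sub_re, one_re]; linarith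
      _ ≤ ‖1 - z‖ := re_le_norm _
  have h2 : ‖z‖ / 4 ≤ 2 * (‖z‖ / 2) / (‖z‖ / 2 + 2) := by
    rw [le_div_iff₀ (by positivity)]
    nlinarith [norm_nonneg z]
  linarith [Real.le_log_one_add_of_nonneg (x := ‖z‖ / 2) (by positivity),
    Real.log_le_log (by positivity) h1]

theorem re_natCast_cpow_neg {n : ℕ} (hn : 0 < n) (σ t : ℝ) :
    ((n : ℂ) ^ (-(σ + t * I))).re = (n : ℝ) ^ (-σ) * Real.cos (Real.log n * t) := by
  rw [cpow_def_of_ne_zero (Nat.cast_ne_zero.mpr hn.ne'), ← natCast_log, exp_re,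
    Real.rpow_def_of_pos (Nat.cast_pos.mpr hn)]
  simp only [mul_re, mul_im, ofReal_re, ofReal_im, neg_re, neg_im, add_re, add_im, I_re, I_im]
  ring_nf
  rw [Real.cos_neg]

theorem Nat.Primes.rpow_neg_le_half {σ : ℝ} (hσ : 1 ≤ σ) (p : Nat.Primes) :
    (p : ℝ) ^ (-σ) ≤ 1 / 2 := by
  have hp : (2 : ℝ) ≤ p := by exact_mod_cast p.prop.two_le
  calc (p : ℝ) ^ (-σ) ≤ (p : ℝ) ^ (-1 : ℝ) :=
        Real.rpow_le_rpow_of_exponent_le (by linarith) (by linarith)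
    _ ≤ 1 / 2 := by rw [Real.rpow_neg_one]; exact inv_anti₀ two_pos hp |>.trans_eq (one_div 2).symm

theorem log_norm_riemannZeta_le {σ t : ℝ} (hσ : 1 < σ) (S : Finset Nat.Primes)
    (hS : ∀ p ∈ S, Real.cos (Real.log p * t) ≤ -1 / 2) :
    Real.log ‖riemannZeta (σ + t * I)‖ ≤
      -(∑ p ∈ S, (p : ℝ) ^ (-σ)) / 4 + 2 * ∑' p : {p // p ∉ S}, (p : ℝ) ^ (-σ) := by
  have hζ := hasSum_neg_log_norm_one_sub_prime_cpow (s := σ + t * I) (by simpa using hσ)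
  have hnorm : ∀ p : Nat.Primes, ‖(p : ℂ) ^ (-(σ + t * I))‖ = (p : ℝ) ^ (-σ) := fun p => by
    rw [norm_natCast_cpow_of_pos p.prop.pos]; simp
  have hsmall : ∀ p : Nat.Primes, (p : ℝ) ^ (-σ) ≤ 1 / 2 := Nat.Primes.rpow_neg_le_half hσ.le
  rw [← hζ.tsum_eq, ← hζ.summable.sum_add_tsum_subtype_compl S, ← tsum_mul_left]
  refine add_le_add ?_ ?_
  · rw [← sum_neg_distrib, sum_div]
    refine sum_le_sum fun p hp => ?_
    rw [← hnorm p]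
    refine neg_log_norm_one_sub_le_of_re_le (by linarith [hsmall p, hnorm p]) ?_
    rw [re_natCast_cpow_neg p.prop.pos, hnorm p]
    nlinarith [hS p hp, Real.rpow_nonneg (Nat.cast_nonneg (p : ℕ)) (-σ)]
  · refine (hζ.summable.subtype _).tsum_le_tsum (fun p => ?_)
      (((Nat.Primes.summable_rpow.mpr (by linarith)).subtype _).mul_left 2)
    rw [← hnorm p]
    exact neg_log_norm_one_sub_le (by rw [hnorm]; exact hsmall p)

theorem Nat.Primes.exists_lt_sum_rpow_neg (B : ℝ) :
    ∃ σ : ℝ, 1 < σ ∧ ∃ S : Finset Nat.Primes, B < ∑ p ∈ S, (p : ℝ) ^ (-σ) := by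
  obtain ⟨S, hS⟩ : ∃ S : Finset Nat.Primes, B < ∑ p ∈ S, (1 / p : ℝ) := by
    by_contra! h
    exact Nat.Primes.not_summable_one_div (summable_of_sum_le (fun p => by positivity) h)
  have hcont : ContinuousAt (fun σ : ℝ => ∑ p ∈ S, (p : ℝ) ^ (-σ)) 1 :=
    (continuous_finsetSum _ fun p _ => (Real.continuous_const_rpow
      (by exact_mod_cast p.prop.ne_zero)).comp continuous_neg).continuousAt
  have hB : ∀ᶠ σ : ℝ in nhds 1, B < ∑ p ∈ S, (p : ℝ) ^ (-σ) :=
    continuousAt_const.eventually_lt hcont (by simpa [Real.rpow_neg_one] using hS)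
  obtain ⟨σ, hσB, hσ⟩ := (hB.filter_mono nhdsWithin_le_nhds |>.and self_mem_nhdsWithin).exists
    (f := nhdsWithin (1 : ℝ) (Set.Ioi 1))
  exact ⟨σ, hσ, S, hσB⟩

/-- Theorem 8: `1/ζ(s)` is unbounded on the half plane `Re s > 1`. -/
theorem one_div_zeta_unbounded :
    ∀ C : ℝ, 0 < C → ∃ s : ℂ, 1 < s.re ∧ C < ‖1 / riemannZeta s‖ := by
  intro C hC
  obtain ⟨σ, hσ, S₀, hS₀⟩ := Nat.Primes.exists_lt_sum_rpow_neg (4 * (Real.log C + 1))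
  obtain ⟨S, hS₀S, htail⟩ : ∃ S, S₀ ⊆ S ∧ ∑' p : {p // p ∉ S}, (p : ℝ) ^ (-σ) < 1 / 8 := by
    obtain ⟨S₁, hS₁⟩ := eventually_atTop.mp <|
      (tendsto_tsum_compl_atTop_zero fun p : Nat.Primes => (p : ℝ) ^ (-σ)).eventually_lt_const
        (by norm_num : (0 : ℝ) < 1 / 8)
    exact ⟨S₀ ∪ S₁, subset_union_left, hS₁ _ subset_union_right⟩
  have hS : ∑ p ∈ S₀, (p : ℝ) ^ (-σ) ≤ ∑ p ∈ S, (p : ℝ) ^ (-σ) :=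
    sum_le_sum_of_subset_of_nonneg hS₀S fun p _ _ => by positivity
  obtain ⟨t, ht⟩ := exists_forall_cos_mul_lt
    (Nat.Primes.sum_mul_log_injective (f := ((↑) : S → Nat.Primes)) Subtype.val_injective)
    (by norm_num : (0 : ℝ) < 1 / 2)
  have hζ : Real.log ‖riemannZeta (σ + t * I)‖ < Real.log C⁻¹ := by
    calc _ ≤ _ := log_norm_riemannZeta_le hσ S fun p hp => by linarith [ht ⟨p, hp⟩]
      _ < Real.log C⁻¹ := by rw [Real.log_inv]; linarith
  have hζpos : 0 < ‖riemannZeta (σ + t * I)‖ :=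
    norm_pos_iff.mpr (riemannZeta_ne_zero_of_one_lt_re (by simpa using hσ))
  refine ⟨σ + t * I, by simpa using hσ, ?_⟩
  rw [norm_div, norm_one, lt_one_div hC hζpos]
  exact (Real.log_lt_log_iff hζpos (inv_pos.mpr hC)).mp hζ |>.trans_eq (one_div C).symm
end

section
/- For every complex number s with Re(s) > 1, one has ζ(2s)/ζ(s) = s · ∫_1^∞ L(x)/x^{s+1} dx, where L(x) = Σ_{n ≤ x} λ(n) is the summatory Liouville function; in particular the improper integral converges. -/
/-
Since `λ` is completely multiplicative with `λ(p) = -1`, on a prime power `p^k` the convolution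
`λ * 1` is `1 - 1 + ⋯ ± 1`, i.e. `1` if `k` is even and `0` otherwise; hence `λ * 1` is the
indicator of the squares and `∑ λ(n) n^{-s} = ζ(2s)/ζ(s)`. As `|L(x)| ≤ x`, Abel summation
rewrites this Dirichlet series as `s ∫_1^∞ L(x) x^{-s-1} dx`, the integral converging
absolutely for `Re s > 1`.
-/

open MeasureTheory Filter Asymptotics Finset ArithmeticFunction

theorem Nat.isSquare_mul_iff_of_coprime {m n : ℕ} (h : m.Coprime n) :
    IsSquare (m * n) ↔ IsSquare m ∧ IsSquare n := by
  refine ⟨fun ⟨c, hc⟩ ↦ ?_, fun ⟨hm, hn⟩ ↦ hm.mul hn⟩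
  have hmn : IsUnit (gcd m n) := Nat.isUnit_iff.mpr h
  have hnm : IsUnit (gcd n m) := Nat.isUnit_iff.mpr h.symm
  obtain ⟨a, rfl⟩ := exists_eq_pow_of_mul_eq_pow hmn (by rw [hc, sq])
  obtain ⟨b, rfl⟩ := exists_eq_pow_of_mul_eq_pow hnm (by rw [mul_comm, hc, sq])
  exact ⟨⟨a, sq a⟩, ⟨b, sq b⟩⟩

theorem Nat.Prime.isSquare_pow_iff {p : ℕ} (hp : p.Prime) {k : ℕ} :
    IsSquare (p ^ k) ↔ Even k := by
  refine ⟨fun ⟨r, hr⟩ ↦ ?_, fun ⟨j, hj⟩ ↦ ⟨p ^ j, by rw [hj, pow_add]⟩⟩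
  obtain ⟨j, -, rfl⟩ := (Nat.dvd_prime_pow hp).mp (Dvd.intro r hr.symm)
  rw [← pow_add] at hr
  exact ⟨j, Nat.pow_right_injective hp.two_le hr⟩

section

open scoped ArithmeticFunction.zeta LSeries.notation

namespace ArithmeticFunction

variable {R : Type*}

def squareIndicator [Zero R] [One R] : ArithmeticFunction R :=
  ⟨fun n ↦ if n ≠ 0 ∧ IsSquare n then 1 else 0, by simp⟩

theorem squareIndicator_apply [Zero R] [One R] (n : ℕ) :
    squareIndicator (R := R) n = if n ≠ 0 ∧ IsSquare n then 1 else 0 := rfl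

theorem isMultiplicative_squareIndicator [MonoidWithZero R] :
    (squareIndicator (R := R)).IsMultiplicative := by
  refine ⟨by simp [squareIndicator_apply], fun {m n} hmn ↦ ?_⟩
  simp only [squareIndicator_apply, mul_ne_zero_iff, Nat.isSquare_mul_iff_of_coprime hmn]
  split_ifs <;> simp_all

theorem squareIndicator_apply_prime_pow [Zero R] [One R] {p : ℕ} (hp : p.Prime) (k : ℕ) :
    squareIndicator (R := R) (p ^ k) = if Even k then 1 else 0 := by
  simp [squareIndicator_apply, hp.ne_zero, hp.isSquare_pow_iff]

theorem coe_liouville_mul_coe_zeta [CommRing R] :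
    (liouville : ArithmeticFunction R) * (ζ : ArithmeticFunction R) = squareIndicator := by
  refine (IsMultiplicative.eq_iff_eq_on_prime_powers _
    (isMultiplicative_liouville.intCast.mul isMultiplicative_zeta.natCast) _
    isMultiplicative_squareIndicator).mpr fun p k hp ↦ ?_
  have hliouville (j : ℕ) : (liouville : ArithmeticFunction R) (p ^ j) = (-1) ^ j := by
    simp [liouville_apply (pow_ne_zero j hp.ne_zero), cardFactors_apply_prime_pow hp]
  rw [coe_mul_zeta_apply, Nat.sum_divisors_prime_pow hp, sum_congr rfl fun j _ ↦ hliouville j,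
    neg_one_geom_sum, squareIndicator_apply_prime_pow hp]
  by_cases hk : Even k <;> simp [hk, Nat.even_add_one]

theorem LSeries_squareIndicator {s : ℂ} (hs : 1 < s.re) :
    LSeries ↗(squareIndicator : ArithmeticFunction ℂ) s = riemannZeta (2 * s) := by
  have hs₂ : 1 < (2 * s).re := by simpa using show 1 < 2 * s.re by linarith
  have hsupp : Function.support (LSeries.term ↗(squareIndicator : ArithmeticFunction ℂ) s) ⊆
      Set.range (· ^ 2) := by
    refine Function.support_subset_iff'.mpr fun n hns ↦ ?_
    rcases eq_or_ne n 0 with rfl | hn₀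
    · exact LSeries.term_zero _ _
    have : ¬IsSquare n := fun ⟨r, hr⟩ ↦ hns ⟨r, by rw [hr, ← sq]⟩
    simp [LSeries.term_of_ne_zero hn₀, squareIndicator_apply, this]
  rw [← LSeries_one_eq_riemannZeta hs₂, LSeries, LSeries,
    ← (Nat.pow_left_injective two_ne_zero).tsum_eq hsupp]
  refine tsum_congr fun m ↦ ?_
  rcases eq_or_ne m 0 with rfl | hm
  · simp
  rw [LSeries.term_of_ne_zero hm, LSeries.term_of_ne_zero (pow_ne_zero 2 hm),
    squareIndicator_apply, if_pos ⟨pow_ne_zero 2 hm, m, sq m⟩, Pi.one_apply, Nat.cast_pow,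
    ← Complex.natCast_cpow_natCast_mul, Nat.cast_ofNat]

theorem LSeries_liouville {s : ℂ} (hs : 1 < s.re) :
    LSeries ↗liouville s = riemannZeta (2 * s) / riemannZeta s := by
  have hsumm : LSeriesSummable ↗liouville s :=
    LSeriesSummable_of_bounded_of_one_lt_re (m := 1) (fun n hn ↦ by simp [liouville_apply hn]) hs
  have hmul := LSeries_mul' (f := (liouville : ArithmeticFunction ℂ))
    (g := (ζ : ArithmeticFunction ℂ))
    (by simpa using hsumm) (by simpa using LSeriesSummable_zeta_iff.mpr hs)
  rw [coe_liouville_mul_coe_zeta, LSeries_squareIndicator hs] at hmul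
  simp only [intCoe_apply, natCoe_apply] at hmul
  rw [hmul, LSeries_zeta_eq_riemannZeta hs,
    mul_div_cancel_right₀ _ (riemannZeta_ne_zero_of_one_lt_re hs)]

theorem sum_Icc_norm_liouville (n : ℕ) : ∑ k ∈ Icc 1 n, ‖(liouville k : ℂ)‖ = n := by
  rw [sum_congr rfl fun k hk ↦ ?_, sum_const, Nat.card_Icc, nsmul_one, add_tsub_cancel_right]
  simp [liouville_apply (Nat.one_le_iff_ne_zero.mp (mem_Icc.mp hk).1)]

end ArithmeticFunction

end

theorem integrableOn_Ioi_sum_Icc_mul_cpow (f : ℕ → ℂ) {r : ℝ} (hr : 0 ≤ r) {s : ℂ}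
    (hs : r < s.re) (hO : (fun n ↦ ∑ k ∈ Icc 1 n, f k) =O[atTop] fun n ↦ (n : ℝ) ^ r) :
    IntegrableOn (fun t : ℝ ↦ (∑ k ∈ Icc 1 ⌊t⌋₊, f k) * (t : ℂ) ^ (-(s + 1)))
      (Set.Ioi 1) := by
  have hloc : LocallyIntegrableOn
      (fun t : ℝ ↦ (∑ k ∈ Icc 1 ⌊t⌋₊, f k) * (t : ℂ) ^ (-(s + 1))) (Set.Ici 1) := by
    simp_rw [mul_comm]
    refine locallyIntegrableOn_mul_sum_Icc f zero_le_one ?_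
    refine ContinuousOn.locallyIntegrableOn (fun t ht ↦ ?_) measurableSet_Ici
    exact (Complex.continuousAt_ofReal_cpow_const _ _ <|
      Or.inr (zero_lt_one.trans_le ht).ne').continuousWithinAt
  have hO_floor : (fun t : ℝ ↦ ∑ k ∈ Icc 1 ⌊t⌋₊, f k) =O[atTop] fun t ↦ t ^ r :=
    (hO.comp_tendsto tendsto_nat_floor_atTop).trans <|
      isEquivalent_nat_floor.isBigO.rpow hr (eventually_ge_atTop 0)
  refine (hloc.integrableOn_of_isBigO_atTop (g := fun t ↦ t ^ (r - (s.re + 1))) ?_ ?_).mono_set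
    Set.Ioi_subset_Ici_self
  · refine hO_floor.mul_atTop_rpow_of_isBigO_rpow r (-(s.re + 1)) _ ?_ (by linarith)
    simpa using (Complex.norm_ofReal_cpow_eventually_eq_atTop (-(s + 1))).isBigO.of_norm_left
  · rw [integrableAtFilter_rpow_atTop_iff]
    linarith

/-- Lemma 10(ii), integral form: for `Re s > 1`,
`ζ(2s)/ζ(s) = s * ∫_1^∞ L(x) / x ^ (s+1) dx`, where `L(x) = ∑_{n ≤ x} λ(n)` is the
summatory Liouville function and `λ(n) = (-1)^Ω(n)`; in particular the improper
integral converges. -/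
theorem zeta_ratio_eq_integral_summatory_liouville (L : ℝ → ℂ)
    (hL : ∀ x : ℝ, L x = ∑ n ∈ Finset.Icc 1 ⌊x⌋₊, (-1 : ℂ) ^ (ArithmeticFunction.cardFactors n))
    (s : ℂ) (hs : 1 < s.re) :
    IntegrableOn (fun x : ℝ => L x / (x : ℂ) ^ (s + 1)) (Set.Ioi 1) ∧
    riemannZeta (2 * s) / riemannZeta s =
      s * ∫ x in Set.Ioi (1 : ℝ), L x / (x : ℂ) ^ (s + 1) := by
  have hL_liouville (x : ℝ) : L x = ∑ k ∈ Icc 1 ⌊x⌋₊, (liouville k : ℂ) :=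
    (hL x).trans <| sum_congr rfl fun k hk ↦ by
      simp [liouville_apply (Nat.one_le_iff_ne_zero.mp (mem_Icc.mp hk).1)]
  have hintegrand : (fun x : ℝ ↦ L x / (x : ℂ) ^ (s + 1)) =
      fun t : ℝ ↦ (∑ k ∈ Icc 1 ⌊t⌋₊, (liouville k : ℂ)) * (t : ℂ) ^ (-(s + 1)) :=
    funext fun x ↦ by rw [hL_liouville, Complex.cpow_neg, div_eq_mul_inv]
  have hO_norm : (fun n ↦ ∑ k ∈ Icc 1 n, ‖(liouville k : ℂ)‖) =O[atTop]
      fun n : ℕ ↦ (n : ℝ) ^ (1 : ℝ) := by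
    simp_rw [sum_Icc_norm_liouville, Real.rpow_one]
    exact isBigO_refl _ _
  have hO : (fun n ↦ ∑ k ∈ Icc 1 n, (liouville k : ℂ)) =O[atTop]
      fun n : ℕ ↦ (n : ℝ) ^ (1 : ℝ) :=
    (isBigO_of_le _ fun _ ↦ (norm_sum_le _ _).trans (Real.le_norm_self _)).trans hO_norm
  rw [hintegrand, ← LSeries_liouville hs]
  exact ⟨integrableOn_Ioi_sum_Icc_mul_cpow _ zero_le_one hs hO,
    LSeries_eq_mul_integral' _ zero_le_one hs hO_norm⟩
end

section
/- For every complex number s = σ + it with σ = Re(s) > 1, one has |1/ζ(s)| ≤ ζ(σ)/ζ(2σ), where ζ(σ) and ζ(2σ) denote the (real, positive) values of the Riemann zeta function at the real points σ and 2σ. -/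
/-!
By the Euler product, `‖1/ζ(s)‖ = ∏ₚ ‖1 - p^{-s}‖ ≤ ∏ₚ (1 + p^{-σ})`, and the identity
`1 + y = (1 - y)⁻¹ / (1 - y²)⁻¹` at `y = p^{-σ}` identifies the right-hand product with the
Euler product of `ζ(σ)/ζ(2σ)`. The comparison of the two infinite products is made on finite
partial products, whose factors are nonnegative.
-/

open Nat

theorem hasProd_le_hasProd_of_nonneg {ι α : Type*} [CommMonoidWithZero α] [Preorder α]
    [ZeroLEOneClass α] [PosMulMono α] [TopologicalSpace α] [OrderClosedTopology α]
    {L : SummationFilter ι} [L.NeBot] {f g : ι → α} {a b : α}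
    (hf₀ : ∀ i, 0 ≤ f i) (hfg : ∀ i, f i ≤ g i) (hf : HasProd f a L) (hg : HasProd g b L) :
    a ≤ b :=
  le_of_tendsto_of_tendsto' hf hg fun _ ↦
    Finset.prod_le_prod (fun i _ ↦ hf₀ i) fun i _ ↦ hfg i

theorem Complex.hasProd_ofReal {ι : Type*} {L : SummationFilter ι} {f : ι → ℝ} {x : ℝ} :
    HasProd (fun i ↦ (f i : ℂ)) x L ↔ HasProd f x L :=
  isUniformEmbedding_ofReal.isUniformInducing.isInducing.hasProd_iff (g := ofRealHom) f x

theorem inv_one_sub_div_inv_one_sub_sq {K : Type*} [Field K] {x : K} (hx : x ≠ 1) :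
    (1 - x)⁻¹ / (1 - x ^ 2)⁻¹ = 1 + x := by
  rw [inv_div_inv, show 1 - x ^ 2 = (1 + x) * (1 - x) by ring,
    mul_div_cancel_right₀ _ (sub_ne_zero.mpr hx.symm)]

theorem norm_one_sub_natCast_cpow_neg_le {n : ℕ} (hn : n ≠ 0) (s : ℂ) :
    ‖1 - (n : ℂ) ^ (-s)‖ ≤ 1 + (n : ℝ) ^ (-s.re) := by
  calc ‖1 - (n : ℂ) ^ (-s)‖ ≤ ‖(1 : ℂ)‖ + ‖(n : ℂ) ^ (-s)‖ := norm_sub_le _ _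
    _ = 1 + (n : ℝ) ^ (-s.re) := by
      rw [norm_one, Complex.norm_natCast_cpow_of_pos (Nat.pos_of_ne_zero hn), Complex.neg_re]

theorem riemannZeta_ofReal_eulerProduct_hasProd {x : ℝ} (hx : 1 < x) :
    HasProd (fun p : Primes ↦ (1 - (p : ℝ) ^ (-x))⁻¹) (riemannZeta x).re := by
  have hζ : ((riemannZeta x).re : ℂ) = riemannZeta x :=
    Complex.ext rfl (riemannZeta_im_eq_zero_of_one_lt hx).symm
  rw [← Complex.hasProd_ofReal, hζ]
  convert riemannZeta_eulerProduct_hasProd (s := x) (by simpa) using 2 with p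
  push_cast
  rw [Complex.ofReal_cpow (Nat.cast_nonneg _), Complex.ofReal_neg, Complex.ofReal_natCast]

theorem riemannZeta_div_riemannZeta_two_mul_eulerProduct_hasProd {x : ℝ} (hx : 1 < x) :
    HasProd (fun p : Primes ↦ 1 + (p : ℝ) ^ (-x))
      ((riemannZeta x).re / (riemannZeta (2 * x : ℂ)).re) := by
  have h2x : 1 < 2 * x := by linarith
  have hsq (p : Primes) : (p : ℝ) ^ (-(2 * x)) = ((p : ℝ) ^ (-x)) ^ 2 := by
    rw [← Real.rpow_natCast, ← Real.rpow_mul (Nat.cast_nonneg _)]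
    ring_nf
  have hlt (p : Primes) : (p : ℝ) ^ (-x) < 1 :=
    Real.rpow_lt_one_of_one_lt_of_neg (by exact_mod_cast p.prop.one_lt) (by linarith)
  have hfactor : (fun p : Primes ↦ 1 + (p : ℝ) ^ (-x)) =
      fun p : Primes ↦ (1 - (p : ℝ) ^ (-x))⁻¹ / (1 - (p : ℝ) ^ (-(2 * x)))⁻¹ := by
    funext p
    rw [hsq, inv_one_sub_div_inv_one_sub_sq (hlt p).ne]
  rw [hfactor, show (2 * x : ℂ) = (2 * x : ℝ) by push_cast; rfl]
  exact (riemannZeta_ofReal_eulerProduct_hasProd hx).div₀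
    (riemannZeta_ofReal_eulerProduct_hasProd h2x) (riemannZeta_re_pos_of_one_lt h2x).ne'

theorem norm_inv_riemannZeta_eulerProduct_hasProd {s : ℂ} (hs : 1 < s.re) :
    HasProd (fun p : Primes ↦ ‖1 - (p : ℂ) ^ (-s)‖) ‖1 / riemannZeta s‖ := by
  simpa only [inv_inv, one_div] using
    ((riemannZeta_eulerProduct_hasProd hs).inv₀ (riemannZeta_ne_zero_of_one_lt_re hs)).norm

/-- Theorem 16(i) (Titchmarsh): for `σ = Re s > 1`,
`|1/ζ(s)| ≤ ζ(σ)/ζ(2σ)`, where `ζ(σ)` and `ζ(2σ)` are the (real, positive)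
values of the zeta function at the real points `σ` and `2σ`. -/
theorem inv_zeta_le_zeta_ratio (s : ℂ) (hs : 1 < s.re) :
    ‖1 / riemannZeta s‖ ≤
      (riemannZeta (s.re : ℂ)).re / (riemannZeta (2 * s.re : ℂ)).re :=
  hasProd_le_hasProd_of_nonneg (fun _ ↦ norm_nonneg _)
    (fun p ↦ norm_one_sub_natCast_cpow_neg_le p.prop.ne_zero s)
    (norm_inv_riemannZeta_eulerProduct_hasProd hs)
    (riemannZeta_div_riemannZeta_two_mul_eulerProduct_hasProd hs)
end
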